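/- arXiv:2405.01785 — 3 statements merged into one kernel-verified Lean document; each statement's English description precedes it below -/
import Mathlib

section
/- Let T ≥ 1 be a natural number, let r : Fin T → ℝ and s : Fin T → ℝ be nonnegative (the received amplitudes in the first and second halves of a Manchester bit period), let h be a nonzero complex number, and let σ > 0. Define P₁(ρ) = (1/(2π))²·∫_0^{2π} ∫_0^{2π} (1/(π·σ²))·exp(−|ρ·e^{iφ} − h·e^{iθ}|²/σ²) dφ dθ and P₀(ρ) = (1/(π·σ²))·exp(−ρ²/σ²). Then log( (∏_{t} P₁(r t) · ∏_{t} P₀(s t)) / (∏_{t} P₀(r t) · ∏_{t} P₁(s t)) ) = ∑_{t} log I₀(2·(r t)·|h|/σ²) − ∑_{t} log I₀(2·(s t)·|h|/σ²), where I₀(x) = (1/π)·∫_0^π exp(x·cos z) dz. -/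
open Real Complex

/-!
Writing `h = ‖h‖ e^{i arg h}`, the law of cosines turns the on-chip Gaussian into
`e^{-(ρ² + ‖h‖²)/σ²} · e^{(2ρ‖h‖/σ²) cos(φ - θ - arg h)}`. By periodicity and evenness of
`cos`, the `φ`-integral of the second factor is `2π I₀(2ρ‖h‖/σ²)` for every `θ`, so
`P₁ ρ = e^{-‖h‖²/σ²} I₀(2ρ‖h‖/σ²) P₀ ρ`. In the likelihood ratio the `P₀` factors and the
constants `e^{-‖h‖²/σ²}` (one per chip on each side) cancel, leaving `∏ I₀(r) / ∏ I₀(s)`.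
-/

theorem sq_norm_ofReal_mul_exp_sub (a b x y : ℝ) :
    ‖(a : ℂ) * Complex.exp (Complex.I * x) - (b : ℂ) * Complex.exp (Complex.I * y)‖ ^ 2
      = a ^ 2 + b ^ 2 - 2 * a * b * Real.cos (x - y) := by
  simp only [mul_comm Complex.I, Complex.exp_mul_I, Real.cos_sub]
  rw [Complex.sq_norm, Complex.normSq_apply]
  simp only [sub_re, mul_re, ofReal_re, add_re, cos_ofReal_re, sin_ofReal_re, I_re, mul_zero,
    sin_ofReal_im, I_im, mul_one, sub_self, add_zero, ofReal_im, add_im, cos_ofReal_im, mul_im,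
    zero_add, zero_mul, sub_zero, sub_im]
  nlinarith [Real.sin_sq_add_cos_sq x, Real.sin_sq_add_cos_sq y]

theorem mul_exp_I_mul_eq_norm_mul_exp (h : ℂ) (θ : ℝ) :
    h * Complex.exp (Complex.I * θ)
      = (‖h‖ : ℂ) * Complex.exp (Complex.I * ((θ + Complex.arg h : ℝ) : ℂ)) := by
  push_cast
  rw [mul_add, Complex.exp_add, mul_comm Complex.I (Complex.arg h : ℂ),
    mul_comm (Complex.exp (Complex.I * θ)), ← mul_assoc, Complex.norm_mul_exp_arg_mul_I]

theorem integral_comp_cos_sub {g : ℝ → ℝ} (hg : Continuous g) (c : ℝ) :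
    ∫ φ in (0 : ℝ)..(2 * π), g (Real.cos (φ - c)) = 2 * ∫ z in (0 : ℝ)..π, g (Real.cos z) := by
  have hgc : Continuous fun z => g (Real.cos z) := hg.comp Real.continuous_cos
  have hper : Function.Periodic (fun z => g (Real.cos z)) (2 * π) := fun z => by
    simp only [Real.cos_add_two_pi]
  have hrefl : ∫ z in π..(2 * π), g (Real.cos z) = ∫ z in (0 : ℝ)..π, g (Real.cos z) := by
    have := intervalIntegral.integral_comp_sub_left (a := 0) (b := π)
      (fun z => g (Real.cos z)) (2 * π)
    rw [sub_zero, show 2 * π - π = π by ring] at this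
    rw [← this]
    refine intervalIntegral.integral_congr fun z _ => ?_
    simp only [Real.cos_two_pi_sub]
  calc ∫ φ in (0 : ℝ)..(2 * π), g (Real.cos (φ - c))
      = ∫ z in (-c)..(-c + 2 * π), g (Real.cos z) := by
        rw [intervalIntegral.integral_comp_sub_right (fun z => g (Real.cos z))]
        ring_nf
    _ = ∫ z in (0 : ℝ)..(0 + 2 * π), g (Real.cos z) := hper.intervalIntegral_add_eq _ _
    _ = (∫ z in (0 : ℝ)..π, g (Real.cos z)) + ∫ z in π..(2 * π), g (Real.cos z) := by
        rw [zero_add, intervalIntegral.integral_add_adjacent_intervals] <;>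
          exact hgc.intervalIntegrable _ _
    _ = 2 * ∫ z in (0 : ℝ)..π, g (Real.cos z) := by rw [hrefl]; ring

noncomputable def besselI0 (x : ℝ) : ℝ :=
  (1 / π) * ∫ z in (0 : ℝ)..π, Real.exp (x * Real.cos z)

theorem besselI0_pos (x : ℝ) : 0 < besselI0 x := by
  have hint : 0 < ∫ z in (0 : ℝ)..π, Real.exp (x * Real.cos z) :=
    intervalIntegral.intervalIntegral_pos_of_pos
      ((by fun_prop : Continuous fun z => Real.exp (x * Real.cos z)).intervalIntegrable _ _)
      (fun _ => Real.exp_pos _) Real.pi_pos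
  unfold besselI0
  have := Real.pi_pos
  positivity

theorem integral_exp_mul_cos_sub (x c : ℝ) :
    ∫ φ in (0 : ℝ)..(2 * π), Real.exp (x * Real.cos (φ - c)) = 2 * π * besselI0 x := by
  rw [integral_comp_cos_sub (g := fun u => Real.exp (x * u)) (by fun_prop), besselI0]
  field_simp

noncomputable def offChipDensity (σ ρ : ℝ) : ℝ :=
  (1 / (π * σ ^ 2)) * Real.exp (-ρ ^ 2 / σ ^ 2)

noncomputable def onChipDensity (h : ℂ) (σ ρ : ℝ) : ℝ :=
  (1 / (2 * π)) ^ 2 * ∫ θ in (0 : ℝ)..(2 * π), ∫ φ in (0 : ℝ)..(2 * π),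
    (1 / (π * σ ^ 2)) * Real.exp (-(‖(ρ : ℂ) * Complex.exp (Complex.I * φ)
      - h * Complex.exp (Complex.I * θ)‖ ^ 2) / σ ^ 2)

theorem offChipDensity_pos {σ : ℝ} (hσ : σ ≠ 0) (ρ : ℝ) : 0 < offChipDensity σ ρ := by
  have := Real.pi_pos
  unfold offChipDensity
  positivity

theorem onChipDensity_eq (h : ℂ) (σ ρ : ℝ) :
    onChipDensity h σ ρ
      = Real.exp (-‖h‖ ^ 2 / σ ^ 2) * besselI0 (2 * ρ * ‖h‖ / σ ^ 2) * offChipDensity σ ρ := by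
  have inner : ∀ θ : ℝ,
      ∫ φ in (0 : ℝ)..(2 * π), (1 / (π * σ ^ 2)) * Real.exp (-(‖(ρ : ℂ) *
        Complex.exp (Complex.I * φ) - h * Complex.exp (Complex.I * θ)‖ ^ 2) / σ ^ 2)
      = (1 / (π * σ ^ 2)) * Real.exp (-(ρ ^ 2 + ‖h‖ ^ 2) / σ ^ 2)
          * (2 * π * besselI0 (2 * ρ * ‖h‖ / σ ^ 2)) := by
    intro θ
    simp_rw [mul_exp_I_mul_eq_norm_mul_exp h θ, sq_norm_ofReal_mul_exp_sub,
      show ∀ u : ℝ, -(ρ ^ 2 + ‖h‖ ^ 2 - 2 * ρ * ‖h‖ * u) / σ ^ 2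
        = -(ρ ^ 2 + ‖h‖ ^ 2) / σ ^ 2 + 2 * ρ * ‖h‖ / σ ^ 2 * u from fun u => by ring,
      Real.exp_add, ← mul_assoc]
    rw [intervalIntegral.integral_const_mul, integral_exp_mul_cos_sub]
    ring
  rw [onChipDensity, offChipDensity, intervalIntegral.integral_congr fun θ _ => inner θ,
    intervalIntegral.integral_const, smul_eq_mul, sub_zero,
    show -(ρ ^ 2 + ‖h‖ ^ 2) / σ ^ 2 = -‖h‖ ^ 2 / σ ^ 2 + -ρ ^ 2 / σ ^ 2 by ring, Real.exp_add]
  field_simp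

theorem log_likelihood_ratio_eq_sum_log_sub_sum_log {α ι : Type*} [Fintype ι]
    {p₁ p₀ w : α → ℝ} {C : ℝ} (hC : C ≠ 0) (hw : ∀ a, w a ≠ 0) (hp₀ : ∀ a, p₀ a ≠ 0)
    (hp₁ : ∀ a, p₁ a = C * w a * p₀ a) (r s : ι → α) :
    Real.log (((∏ t, p₁ (r t)) * ∏ t, p₀ (s t)) / ((∏ t, p₀ (r t)) * ∏ t, p₁ (s t)))
      = ∑ t, Real.log (w (r t)) - ∑ t, Real.log (w (s t)) := by
  have hprod : ∀ u : ι → α,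
      ∏ t, p₁ (u t) = C ^ Fintype.card ι * (∏ t, w (u t)) * ∏ t, p₀ (u t) := fun u => by
    simp only [hp₁, Finset.prod_mul_distrib, Finset.prod_const, Finset.card_univ]
  have hw' : ∀ u : ι → α, ∏ t, w (u t) ≠ 0 := fun u => Finset.prod_ne_zero_iff.2 fun t _ => hw _
  have hp₀' : ∀ u : ι → α, ∏ t, p₀ (u t) ≠ 0 :=
    fun u => Finset.prod_ne_zero_iff.2 fun t _ => hp₀ _
  have hCn : C ^ Fintype.card ι ≠ 0 := pow_ne_zero _ hC
  have hratio : ((∏ t, p₁ (r t)) * ∏ t, p₀ (s t)) / ((∏ t, p₀ (r t)) * ∏ t, p₁ (s t))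
      = (∏ t, w (r t)) / ∏ t, w (s t) := by
    rw [hprod r, hprod s]
    field_simp [hw' r, hw' s, hp₀' r, hp₀' s, hCn]
  rw [hratio, Real.log_div (hw' r) (hw' s), Real.log_prod fun t _ => hw _,
    Real.log_prod fun t _ => hw _]

theorem ooK_exact_LLR_general (T : ℕ) (r s : Fin T → ℝ)
    (h : ℂ) (σ : ℝ) (hσ : 0 < σ)
    (P₁ P₀ : ℝ → ℝ)
    (hP₁ : ∀ ρ : ℝ, P₁ ρ = (1 / (2 * π)) ^ 2 *
        ∫ θ in (0 : ℝ)..(2 * π), ∫ φ in (0 : ℝ)..(2 * π),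
          (1 / (π * σ ^ 2)) *
            Real.exp (-(‖(ρ : ℂ) * Complex.exp (Complex.I * φ)
                - h * Complex.exp (Complex.I * θ)‖ ^ 2) / σ ^ 2))
    (hP₀ : ∀ ρ : ℝ, P₀ ρ = (1 / (π * σ ^ 2)) * Real.exp (-ρ ^ 2 / σ ^ 2)) :
    Real.log (((∏ t, P₁ (r t)) * ∏ t, P₀ (s t)) /
        ((∏ t, P₀ (r t)) * ∏ t, P₁ (s t)))
      = (∑ t, Real.log ((1 / π) * ∫ z in (0 : ℝ)..π,
            Real.exp ((2 * r t * ‖h‖ / σ ^ 2) * Real.cos z)))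
        - ∑ t, Real.log ((1 / π) * ∫ z in (0 : ℝ)..π,
            Real.exp ((2 * s t * ‖h‖ / σ ^ 2) * Real.cos z)) := by
  have hP₁' : ∀ ρ, P₁ ρ = Real.exp (-‖h‖ ^ 2 / σ ^ 2) * besselI0 (2 * ρ * ‖h‖ / σ ^ 2) * P₀ ρ :=
    fun ρ => by rw [hP₁, hP₀, ← onChipDensity, onChipDensity_eq, offChipDensity]
  exact log_likelihood_ratio_eq_sum_log_sub_sum_log (Real.exp_pos _).ne'
    (fun _ => (besselI0_pos _).ne') (fun ρ => hP₀ ρ ▸ (offChipDensity_pos hσ.ne' ρ).ne') hP₁' r s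

/-- Exact LLR of a Manchester-coded OOK bit (Theorem 1): the log of the
likelihood ratio built from the on/off conditional densities `P₁`, `P₀`
equals `∑ₜ log I₀(2 rₜ |h|/σ²) − ∑ₜ log I₀(2 sₜ |h|/σ²)`. -/
theorem ooK_exact_LLR (T : ℕ) (hT : 1 ≤ T) (r s : Fin T → ℝ)
    (hr : ∀ t, 0 ≤ r t) (hs : ∀ t, 0 ≤ s t)
    (h : ℂ) (hh : h ≠ 0) (σ : ℝ) (hσ : 0 < σ)
    (P₁ P₀ : ℝ → ℝ)
    (hP₁ : ∀ ρ : ℝ, P₁ ρ = (1 / (2 * π)) ^ 2 *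
        ∫ θ in (0 : ℝ)..(2 * π), ∫ φ in (0 : ℝ)..(2 * π),
          (1 / (π * σ ^ 2)) *
            Real.exp (-(‖(ρ : ℂ) * Complex.exp (Complex.I * φ)
                - h * Complex.exp (Complex.I * θ)‖ ^ 2) / σ ^ 2))
    (hP₀ : ∀ ρ : ℝ, P₀ ρ = (1 / (π * σ ^ 2)) * Real.exp (-ρ ^ 2 / σ ^ 2)) :
    Real.log (((∏ t, P₁ (r t)) * ∏ t, P₀ (s t)) /
        ((∏ t, P₀ (r t)) * ∏ t, P₁ (s t)))
      = (∑ t, Real.log ((1 / π) * ∫ z in (0 : ℝ)..π,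
            Real.exp ((2 * r t * ‖h‖ / σ ^ 2) * Real.cos z)))
        - ∑ t, Real.log ((1 / π) * ∫ z in (0 : ℝ)..π,
            Real.exp ((2 * s t * ‖h‖ / σ ^ 2) * Real.cos z)) :=
  ooK_exact_LLR_general T r s h σ hσ P₁ P₀ hP₁ hP₀
end

section
/- For every real number x > 0, (1/π)·∫_0^∞ exp(−2·x·(z/π)²) dz = (1/4)·√(2π/x), and consequently p(x) < (1/4)·√(2π/x), where p(x) = (1/π)·∫_0^π exp(−2·x·sin(z/2)²) dz. -/
open Real MeasureTheory

/-!
Substituting `z ↦ z / π` in the Gaussian integral gives the closed form. For the bound, Jordan's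
inequality `sin (z / 2) ≥ z / π` on `[0, π]` dominates the integrand of `p x` by the Gaussian, and
the Gaussian, being positive, has strictly larger integral over `(0, ∞)` than over `[0, π]`.
-/

open Set

theorem integral_Ioi_exp_neg_mul_div_sq (a : ℝ) {b : ℝ} (hb : 0 < b) :
    ∫ z in Ioi (0 : ℝ), exp (-a * (z / b) ^ 2) = b * √(π / a) / 2 := by
  simp_rw [div_eq_mul_inv _ b]
  rw [integral_comp_mul_right_Ioi (fun u => exp (-a * u ^ 2)) 0 (inv_pos.mpr hb), zero_mul,
    integral_gaussian_Ioi, inv_inv, smul_eq_mul, mul_div_assoc]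

theorem intervalIntegral_lt_integral_Ioi {f : ℝ → ℝ} {a b : ℝ} (hab : a ≤ b)
    (hf : IntegrableOn f (Ioi a)) (hpos : ∀ x ∈ Ioi b, 0 < f x) :
    ∫ x in a..b, f x < ∫ x in Ioi a, f x := by
  have hfb : IntegrableOn f (Ioi b) := hf.mono_set (Ioi_subset_Ioi hab)
  have htail : 0 < ∫ x in Ioi b, f x := by
    have hsupp : Function.support f ∩ Ioi b = Ioi b :=
      inter_eq_right.mpr fun x hx => (hpos x hx).ne'
    rw [setIntegral_pos_iff_support_of_nonneg_ae
      ((ae_restrict_iff' measurableSet_Ioi).mpr (.of_forall fun x hx => (hpos x hx).le)) hfb,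
      hsupp]
    exact isOpen_Ioi.measure_pos volume nonempty_Ioi
  linarith [intervalIntegral.integral_interval_add_Ioi hf hfb]

theorem div_pi_le_sin_half {z : ℝ} (hz₀ : 0 ≤ z) (hzπ : z ≤ π) : z / π ≤ sin (z / 2) := by
  have h := mul_le_sin (x := z / 2) (by positivity) (by linarith)
  rwa [show 2 / π * (z / 2) = z / π by ring] at h

theorem exp_neg_mul_sin_half_sq_le {x z : ℝ} (hx : 0 ≤ x) (hz₀ : 0 ≤ z) (hzπ : z ≤ π) :
    exp (-2 * x * sin (z / 2) ^ 2) ≤ exp (-2 * x * (z / π) ^ 2) := by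
  have hsq : (z / π) ^ 2 ≤ sin (z / 2) ^ 2 :=
    pow_le_pow_left₀ (by positivity) (div_pi_le_sin_half hz₀ hzπ) 2
  exact exp_le_exp.mpr (by nlinarith)

/-- Gaussian integral evaluation `(1/π) ∫_0^∞ exp(−2x(z/π)²) dz = (1/4)·√(2π/x)`
and the resulting strict bound `p x < (1/4)·√(2π/x)` for `x > 0`, where
`p x = (1/π) ∫_0^π exp(−2x sin(z/2)²) dz`. -/
theorem p_lt_quarter_sqrt (x : ℝ) (hx : 0 < x) :
    (1 / π) * (∫ z in Set.Ioi (0 : ℝ), Real.exp (-2 * x * (z / π) ^ 2))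
        = (1 / 4) * Real.sqrt (2 * π / x) ∧
    (1 / π) * ∫ z in (0 : ℝ)..π, Real.exp (-2 * x * Real.sin (z / 2) ^ 2)
        < (1 / 4) * Real.sqrt (2 * π / x) := by
  have hgauss : ∫ z in Ioi (0 : ℝ), exp (-2 * x * (z / π) ^ 2) = π * √(π / (2 * x)) / 2 := by
    simpa only [neg_mul] using integral_Ioi_exp_neg_mul_div_sq (2 * x) pi_pos
  have hvalue : (1 / π) * (∫ z in Ioi (0 : ℝ), exp (-2 * x * (z / π) ^ 2))
      = (1 / 4) * √(2 * π / x) := by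
    rw [hgauss, show 2 * π / x = 2 ^ 2 * (π / (2 * x)) by ring,
      sqrt_mul (by positivity), sqrt_sq zero_le_two]
    field_simp
    norm_num
  have hint : IntegrableOn (fun z => exp (-2 * x * (z / π) ^ 2)) (Ioi 0) := by
    simpa only [neg_mul] using
      ((integrable_exp_neg_mul_sq (by positivity : 0 < 2 * x)).comp_div pi_ne_zero).integrableOn
  refine ⟨hvalue, hvalue ▸ mul_lt_mul_of_pos_left ?_ (by positivity)⟩
  calc ∫ z in (0 : ℝ)..π, exp (-2 * x * sin (z / 2) ^ 2)
      ≤ ∫ z in (0 : ℝ)..π, exp (-2 * x * (z / π) ^ 2) := by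
        refine intervalIntegral.integral_mono_on pi_pos.le
          (Continuous.intervalIntegrable (by fun_prop) _ _)
          (Continuous.intervalIntegrable (by fun_prop) _ _) ?_
        exact fun z hz => exp_neg_mul_sin_half_sq_le hx.le hz.1 hz.2
    _ < ∫ z in Ioi (0 : ℝ), exp (-2 * x * (z / π) ^ 2) :=
        intervalIntegral_lt_integral_Ioi pi_pos.le hint fun z _ => exp_pos _
end

section
/- For every real number x > 0, I₀(x) ≤ (√(2π)/4)·e^x/√x, and hence log I₀(x) ≤ x + log(√(2π)/4) − (1/2)·log x, where I₀(x) = (1/π)·∫_0^π exp(x·cos z) dz. -/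
open Real

/-!
On `[0, π]` the cosine lies below the parabola `1 - 2 z² / π²`, so `exp (x cos z)` is at most
`eˣ · exp (-(2x/π²) z²)`. Bounding the integral of this Gaussian over `[0, π]` by its integral
over the half-line, `√(π / a) / 2` with `a = 2x/π²`, gives exactly `(√(2π)/4) · eˣ / √x` after
dividing by `π`.
-/

lemma exp_mul_cos_le_exp_mul_exp_neg_mul_sq {x z : ℝ} (hx : 0 ≤ x) (hz : |z| ≤ π) :
    exp (x * cos z) ≤ exp x * exp (-(2 * x / π ^ 2) * z ^ 2) := by
  rw [← exp_add, exp_le_exp]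
  have hcos : cos z ≤ 1 - 2 / π ^ 2 * z ^ 2 := cos_le_one_sub_mul_cos_sq hz
  calc x * cos z ≤ x * (1 - 2 / π ^ 2 * z ^ 2) := mul_le_mul_of_nonneg_left hcos hx
    _ = x + -(2 * x / π ^ 2) * z ^ 2 := by ring

lemma intervalIntegral_exp_neg_mul_sq_le {a b : ℝ} (ha : 0 < a) (hb : 0 ≤ b) :
    ∫ z in (0 : ℝ)..b, exp (-a * z ^ 2) ≤ √(π / a) / 2 := by
  rw [← integral_gaussian_Ioi a, intervalIntegral.integral_of_le hb]
  exact MeasureTheory.setIntegral_mono_set (integrableOn_Ioi_exp_neg_mul_sq_iff.2 ha)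
    (Filter.Eventually.of_forall fun z => (exp_pos _).le)
    (Filter.Eventually.of_forall Set.Ioc_subset_Ioi_self)

lemma sqrt_pi_div_two_mul_div_sq {x : ℝ} (hx : 0 < x) :
    √(π / (2 * x / π ^ 2)) = π * √(2 * π) / (2 * √x) := by
  have hπ := pi_pos
  rw [sqrt_eq_iff_eq_sq (by positivity) (by positivity), div_pow, mul_pow, mul_pow,
    sq_sqrt (by positivity), sq_sqrt hx.le]
  field_simp

lemma integral_exp_mul_cos_le {x : ℝ} (hx : 0 < x) :
    ∫ z in (0 : ℝ)..π, exp (x * cos z) ≤ π * (√(2 * π) / 4 * exp x / √x) := by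
  have hπ := pi_pos
  calc ∫ z in (0 : ℝ)..π, exp (x * cos z)
      ≤ ∫ z in (0 : ℝ)..π, exp x * exp (-(2 * x / π ^ 2) * z ^ 2) := by
        refine intervalIntegral.integral_mono_on hπ.le (Continuous.intervalIntegrable
          (by fun_prop) _ _) (Continuous.intervalIntegrable (by fun_prop) _ _) fun z hz => ?_
        exact exp_mul_cos_le_exp_mul_exp_neg_mul_sq hx.le (abs_le.2 ⟨by linarith [hz.1], hz.2⟩)
    _ = exp x * ∫ z in (0 : ℝ)..π, exp (-(2 * x / π ^ 2) * z ^ 2) :=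
        intervalIntegral.integral_const_mul _ _
    _ ≤ exp x * (√(π / (2 * x / π ^ 2)) / 2) :=
        mul_le_mul_of_nonneg_left (intervalIntegral_exp_neg_mul_sq_le (by positivity) hπ.le)
          (exp_pos x).le
    _ = π * (√(2 * π) / 4 * exp x / √x) := by
        rw [sqrt_pi_div_two_mul_div_sq hx]
        ring

lemma integral_exp_mul_cos_pos (x : ℝ) : 0 < ∫ z in (0 : ℝ)..π, exp (x * cos z) :=
  intervalIntegral.intervalIntegral_pos_of_pos_on (Continuous.intervalIntegrable (by fun_prop) _ _)
    (fun z _ => exp_pos _) pi_pos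

lemma log_mul_exp_div_sqrt {c x : ℝ} (hc : 0 < c) (hx : 0 < x) :
    log (c * exp x / √x) = x + log c - 1 / 2 * log x := by
  rw [log_div (by positivity) (sqrt_pos.2 hx).ne', log_mul hc.ne' (exp_ne_zero x), log_exp,
    log_sqrt hx.le]
  ring

/-- Upper bound (equation (8) of the paper):
`I₀ x ≤ (√(2π)/4) · e^x / √x` and hence
`log I₀ x ≤ x + log (√(2π)/4) − (1/2) · log x` for `x > 0`, where
`I₀ x = (1/π) ∫_0^π exp (x cos z) dz`. -/
theorem besselI0_upper_bound (x : ℝ) (hx : 0 < x) :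
    (1 / π) * (∫ z in (0 : ℝ)..π, Real.exp (x * Real.cos z))
        ≤ (Real.sqrt (2 * π) / 4) * Real.exp x / Real.sqrt x ∧
    Real.log ((1 / π) * ∫ z in (0 : ℝ)..π, Real.exp (x * Real.cos z))
        ≤ x + Real.log (Real.sqrt (2 * π) / 4) - (1 / 2) * Real.log x := by
  have hbound : (1 / π) * (∫ z in (0 : ℝ)..π, exp (x * cos z))
      ≤ √(2 * π) / 4 * exp x / √x := by
    rw [one_div_mul_eq_div, div_le_iff₀' pi_pos]
    exact integral_exp_mul_cos_le hx
  have hpos : 0 < (1 / π) * ∫ z in (0 : ℝ)..π, exp (x * cos z) :=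
    mul_pos (one_div_pos.2 pi_pos) (integral_exp_mul_cos_pos x)
  refine ⟨hbound, ?_⟩
  rw [← log_mul_exp_div_sqrt (by positivity) hx]
  exact log_le_log hpos hbound
end
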